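/- Every optimal value ρ_i of the SDP relaxation P_S upper bounds the moment problem value ρ_mom = sup{μ(S) : μ a finite Borel measure on ℝⁿ with ∫x^α dμ = γ_α for α ∈ Γ}, where S = {x : f_j(x) ≥ 0, j=1,…,m}. -/

import Mathlib

open MeasureTheory

def Deg {n : ℕ} (α : Fin n → ℕ) : ℕ := ∑ i, α i

def PSDform {n : ℕ} (i : ℕ) (y : (Fin n → ℕ) → ℝ) : Prop :=
  ∀ T : Finset (Fin n → ℕ), (∀ α ∈ T, Deg α ≤ i) →
    ∀ c : (Fin n → ℕ) → ℝ, 0 ≤ ∑ α ∈ T, ∑ β ∈ T, c α * c β * y (α + β)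

def LocPSDform {n : ℕ} (i : ℕ) (G : Finset (Fin n → ℕ)) (g : (Fin n → ℕ) → ℝ)
    (y : (Fin n → ℕ) → ℝ) : Prop :=
  ∀ T : Finset (Fin n → ℕ), (∀ α ∈ T, Deg α ≤ i) →
    ∀ c : (Fin n → ℕ) → ℝ,
      0 ≤ ∑ α ∈ T, ∑ β ∈ T, c α * c β * ∑ γ ∈ G, g γ * y (α + β + γ)

def FeasiblePS {n m : ℕ} (Γ : Set (Fin n → ℕ)) (γ : (Fin n → ℕ) → ℝ)
    (G : Fin m → Finset (Fin n → ℕ)) (g : Fin m → ((Fin n → ℕ) → ℝ))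
    (v : Fin m → ℕ) (i : ℕ) (y z : (Fin n → ℕ) → ℝ) : Prop :=
  (∀ α ∈ Γ, y α + z α = γ α) ∧ PSDform i y ∧ PSDform i z ∧
    ∀ j : Fin m, LocPSDform (i - v j) (G j) (g j) y

noncomputable def relaxVal {n m : ℕ} (Γ : Set (Fin n → ℕ)) (γ : (Fin n → ℕ) → ℝ)
    (G : Fin m → Finset (Fin n → ℕ)) (g : Fin m → ((Fin n → ℕ) → ℝ))
    (v : Fin m → ℕ) (i : ℕ) : ℝ :=
  sSup {r | ∃ y z, FeasiblePS Γ γ G g v i y z ∧ r = y 0}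

lemma monoCont {n : ℕ} (α : Fin n → ℕ) :
    Continuous fun x : Fin n → ℝ => ∏ k, x k ^ α k :=
  continuous_finset_prod _ fun k _ => (continuous_apply k).pow _

lemma quad_sum_eq {n : ℕ} (μ' : Measure (Fin n → ℝ)) (w : (Fin n → ℝ) → ℝ)
    (T : Finset (Fin n → ℕ)) (c : (Fin n → ℕ) → ℝ)
    (hInt : ∀ α ∈ T, ∀ β ∈ T,
      Integrable (fun x => w x * ∏ k, x k ^ (α k + β k)) μ') :
    ∑ α ∈ T, ∑ β ∈ T, c α * c β * ∫ x, w x * ∏ k, x k ^ (α k + β k) ∂μ'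
      = ∫ x, w x * (∑ α ∈ T, c α * ∏ k, x k ^ α k) ^ 2 ∂μ' := by
  have hpt : ∀ x : Fin n → ℝ,
      w x * (∑ α ∈ T, c α * ∏ k, x k ^ α k) ^ 2
        = ∑ α ∈ T, ∑ β ∈ T, c α * c β * (w x * ∏ k, x k ^ (α k + β k)) := by
    intro x
    rw [sq, Finset.sum_mul_sum, Finset.mul_sum]
    refine Finset.sum_congr rfl fun α _ => ?_
    rw [Finset.mul_sum]
    refine Finset.sum_congr rfl fun β _ => ?_
    simp only [pow_add, Finset.prod_mul_distrib]
    ring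
  rw [show (fun x => w x * (∑ α ∈ T, c α * ∏ k, x k ^ α k) ^ 2)
      = fun x => ∑ α ∈ T, ∑ β ∈ T, c α * c β * (w x * ∏ k, x k ^ (α k + β k))
      from funext hpt]
  rw [integral_finset_sum T fun α hα =>
    integrable_finset_sum T fun β hβ => ((hInt α hα β hβ).const_mul _)]
  refine Finset.sum_congr rfl fun α hα => ?_
  rw [integral_finset_sum T fun β hβ => ((hInt α hα β hβ).const_mul _)]
  refine Finset.sum_congr rfl fun β hβ => ?_
  rw [integral_const_mul]

lemma quad_integral_nonneg {n : ℕ} (μ' : Measure (Fin n → ℝ)) (w : (Fin n → ℝ) → ℝ)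
    (hw : 0 ≤ᵐ[μ'] w)
    (T : Finset (Fin n → ℕ)) (c : (Fin n → ℕ) → ℝ)
    (hInt : ∀ α ∈ T, ∀ β ∈ T,
      Integrable (fun x => w x * ∏ k, x k ^ (α k + β k)) μ') :
    0 ≤ ∑ α ∈ T, ∑ β ∈ T, c α * c β * ∫ x, w x * ∏ k, x k ^ (α k + β k) ∂μ' := by
  rw [quad_sum_eq μ' w T c hInt]
  refine integral_nonneg_of_ae (hw.mono fun x hx => mul_nonneg hx (sq_nonneg _))

/-- every relaxation value `ρ_i` upper bounds `μ(S)` for every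
measure `μ` feasible for the moment problem, hence bounds `ρ_mom`. -/
theorem relaxVal_ge_measure {n m : ℕ} (Γ : Set (Fin n → ℕ)) (γ : (Fin n → ℕ) → ℝ)
    (G : Fin m → Finset (Fin n → ℕ)) (g : Fin m → ((Fin n → ℕ) → ℝ))
    (v : Fin m → ℕ) (i : ℕ)
    (hdeg : ∀ j : Fin m, ∀ δ ∈ G j, Deg δ ≤ 2 * v j)
    (hΓ : ∀ α ∈ Γ, Deg α ≤ 2 * i)
    (μ : Measure (Fin n → ℝ)) [IsFiniteMeasure μ]
    (hint : ∀ α : Fin n → ℕ, Deg α ≤ 2 * i →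
      Integrable (fun x : Fin n → ℝ => ∏ k, x k ^ α k) μ)
    (hmom : ∀ α ∈ Γ, (∫ x, (∏ k, x k ^ α k) ∂μ) = γ α)
    (hbdd : BddAbove {r | ∃ y z, FeasiblePS Γ γ G g v i y z ∧ r = y 0}) :
    (μ {x : Fin n → ℝ | ∀ j : Fin m, 0 ≤ ∑ δ ∈ G j, g j δ * ∏ k, x k ^ δ k}).toReal
      ≤ relaxVal Γ γ G g v i := by
  classical
  set S : Set (Fin n → ℝ) :=
    {x : Fin n → ℝ | ∀ j : Fin m, 0 ≤ ∑ δ ∈ G j, g j δ * ∏ k, x k ^ δ k} with hS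
  have hfcont : ∀ j : Fin m,
      Continuous fun x : Fin n → ℝ => ∑ δ ∈ G j, g j δ * ∏ k, x k ^ δ k :=
    fun j => continuous_finset_sum _ fun δ _ => continuous_const.mul (monoCont δ)
  have hScl : IsClosed S := by
    have : S = ⋂ j : Fin m,
        (fun x : Fin n → ℝ => ∑ δ ∈ G j, g j δ * ∏ k, x k ^ δ k) ⁻¹' Set.Ici 0 := by
      ext x; simp [hS, Set.mem_iInter]
    rw [this]
    exact isClosed_iInter fun j => (isClosed_Ici).preimage (hfcont j)
  -- the truncated sets
  set K : ℕ → Set (Fin n → ℝ) := fun N => S ∩ Metric.closedBall 0 N with hK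
  have hKcomp : ∀ N, IsCompact (K N) := fun N =>
    ((isCompact_closedBall (0 : Fin n → ℝ) N).inter_left hScl)
  have hKmeas : ∀ N, MeasurableSet (K N) := fun N =>
    hScl.measurableSet.inter Metric.isClosed_closedBall.measurableSet
  have hKint : ∀ N, ∀ h : (Fin n → ℝ) → ℝ, Continuous h →
      Integrable h (μ.restrict (K N)) := fun N h hc =>
    (hc.continuousOn).integrableOn_compact (hKcomp N)
  -- feasibility for each N
  have hfeas : ∀ N : ℕ, (μ (K N)).toReal ∈
      {r | ∃ y z, FeasiblePS Γ γ G g v i y z ∧ r = y 0} := by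
    intro N
    refine ⟨fun α => ∫ x in K N, ∏ k, x k ^ α k ∂μ,
      fun α => ∫ x in (K N)ᶜ, ∏ k, x k ^ α k ∂μ, ⟨?_, ?_, ?_, ?_⟩, ?_⟩
    · intro α hα
      rw [← hmom α hα]
      exact integral_add_compl (hKmeas N) (hint α (hΓ α hα))
    · intro T hT c
      have := quad_integral_nonneg (μ.restrict (K N)) (fun _ => (1 : ℝ))
        (Filter.Eventually.of_forall fun _ => zero_le_one) T c
        (fun α _ β _ => by
          simpa using hKint N _ (monoCont (α + β)))
      simpa using this
    · intro T hT c
      have := quad_integral_nonneg (μ.restrict (K N)ᶜ) (fun _ => (1 : ℝ))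
        (Filter.Eventually.of_forall fun _ => zero_le_one) T c
        (fun α hα β hβ => by
          have hd : Deg (α + β) ≤ 2 * i := by
            have : Deg (α + β) = Deg α + Deg β := by
              simp [Deg, Finset.sum_add_distrib]
            rw [this, two_mul]
            exact add_le_add (hT α hα) (hT β hβ)
          simpa using (hint (α + β) hd).restrict)
      simpa using this
    · intro j T hT c
      have hrw : ∀ α ∈ T, ∀ β ∈ T,
          (∑ δ ∈ G j, g j δ * ∫ x in K N, ∏ k, x k ^ ((α + β + δ) k) ∂μ)
            = ∫ x, (∑ δ ∈ G j, g j δ * ∏ k, x k ^ δ k) *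
                ∏ k, x k ^ (α k + β k) ∂(μ.restrict (K N)) := by
        intro α hα β hβ
        have h1 : ∀ δ ∈ G j,
            g j δ * ∫ x in K N, ∏ k, x k ^ ((α + β + δ) k) ∂μ
              = ∫ x, g j δ * ∏ k, x k ^ ((α + β + δ) k) ∂(μ.restrict (K N)) := by
          intro δ _
          rw [integral_const_mul]
        rw [Finset.sum_congr rfl h1,
          ← integral_finset_sum _ (fun δ _ =>
            (hKint N (fun x => g j δ * ∏ k, x k ^ ((α + β + δ) k)) (continuous_const.mul (monoCont (α + β + δ)))))]
        refine integral_congr_ae (Filter.Eventually.of_forall fun x => ?_)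
        simp only [Finset.sum_mul, Pi.add_apply, pow_add, Finset.prod_mul_distrib]
        refine Finset.sum_congr rfl fun δ _ => by ring
      calc (0:ℝ) ≤ ∑ α ∈ T, ∑ β ∈ T, c α * c β *
            ∫ x, (∑ δ ∈ G j, g j δ * ∏ k, x k ^ δ k) *
              ∏ k, x k ^ (α k + β k) ∂(μ.restrict (K N)) := by
            refine quad_integral_nonneg _ _ ?_ T c
              (fun α _ β _ => hKint N _ ((hfcont j).mul (monoCont fun k => α k + β k)))
            refine (ae_restrict_iff' (hKmeas N)).2
              (Filter.Eventually.of_forall fun x hx => ?_)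
            exact hx.1 j
        _ = _ := by
            refine Finset.sum_congr rfl fun α hα => Finset.sum_congr rfl fun β hβ => ?_
            rw [hrw α hα β hβ]
    · symm; simp; rfl
  -- pass to the limit
  have hmono : Monotone K := by
    intro a b hab
    refine Set.inter_subset_inter_right _ (Metric.closedBall_subset_closedBall ?_)
    exact_mod_cast hab
  have hUnion : (⋃ N, K N) = S := by
    ext x
    simp only [Set.mem_iUnion, hK, Set.mem_inter_iff, Metric.mem_closedBall]
    constructor
    · rintro ⟨N, hN, _⟩; exact hN
    · intro hx
      obtain ⟨N, hN⟩ := exists_nat_ge (dist x 0)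
      exact ⟨N, hx, hN⟩
  have htend : Filter.Tendsto (fun N => (μ (K N)).toReal) Filter.atTop
      (nhds (μ S).toReal) := by
    have h1 := tendsto_measure_iUnion_atTop (μ := μ) hmono
    rw [hUnion] at h1
    exact (ENNReal.tendsto_toReal (measure_ne_top μ S)).comp h1
  refine le_of_tendsto htend (Filter.Eventually.of_forall fun N => ?_)
  exact le_csSup hbdd (hfeas N)
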